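/- arXiv:1710.01106 — 3 statements merged into one kernel-verified Lean document; each statement's English description precedes it below -/
import Mathlib

section
/- Let λ < 0 be real and Δt > 0. Then |1 + Δt·λ/2 + (Δt·λ/2)²/2| ≤ 1 if and only if Δt ≤ −4/λ. Consequently, the critical time-step of the CN-RK2 Strang splitting method determined by a most negative real eigenvalue λ_min of the Jacobian is Δt* = −4/λ_min. -/
/-- RK2 half-step amplification criterion: for real `λ < 0` and `Δt > 0`,
`|1 + Δtλ/2 + (Δtλ/2)²/2| ≤ 1 ↔ Δt ≤ -4/λ`; hence the critical time-step of the
CN-RK2 Strang splitting determined by the most negative real eigenvalue `λ_min`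
is `Δt* = -4/λ_min`. -/
theorem cnrk2_critical_time_step (lam : ℝ) (hlam : lam < 0) (dt : ℝ) (hdt : 0 < dt) :
    |1 + dt * lam / 2 + (dt * lam / 2) ^ 2 / 2| ≤ 1 ↔ dt ≤ -4 / lam := by
  rw [abs_le, le_div_iff_of_neg hlam]
  constructor
  · rintro ⟨h1, h2⟩
    nlinarith [sq_nonneg (dt * lam)]
  · intro h
    have h0 : dt * lam < 0 := mul_neg_of_pos_of_neg hdt hlam
    have key : 0 ≤ (-(dt * lam)) * (dt * lam + 4) :=
      mul_nonneg (by linarith) (by linarith)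
    constructor <;> nlinarith [sq_nonneg (dt * lam + 2)]
end

section
/- For every z ∈ ℂ, if |1 + z + z²/2| ≤ 1 then |1 + z + z²/2 + z³/6 + z⁴/24| ≤ 1. That is, the absolute stability region of the explicit second-order Runge–Kutta method is contained in the absolute stability region of the classical explicit fourth-order Runge–Kutta method. -/
/-- The absolute stability region of the explicit second-order Runge–Kutta method is
contained in that of the classical explicit fourth-order Runge–Kutta method:
for all `z ∈ ℂ`, `|1 + z + z²/2| ≤ 1` implies `|1 + z + z²/2 + z³/6 + z⁴/24| ≤ 1`. -/
theorem rk2_stability_region_subset_rk4 (z : ℂ)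
    (h : ‖1 + z + z ^ 2 / 2‖ ≤ 1) :
    ‖1 + z + z ^ 2 / 2 + z ^ 3 / 6 + z ^ 4 / 24‖ ≤ 1 := by
  set s : ℂ := z + 1 with hs
  set u : ℂ := s ^ 2 with hu
  have key : (1 : ℂ) + z + z ^ 2 / 2 = (u + 1) / 2 := by
    simp only [hu, hs]; ring
  have hu1 : ‖u + 1‖ ≤ 2 := by
    have := h
    rw [key, norm_div] at this
    simp only [Complex.norm_ofNat] at this
    linarith [this]
  set x : ℝ := u.re with hx
  have hnsq1 : Complex.normSq (u + 1) ≤ 4 := by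
    have h1 : ‖u + 1‖ ^ 2 ≤ 2 ^ 2 := by
      have := norm_nonneg (u + 1)
      nlinarith
    rw [Complex.sq_norm] at h1; linarith
  have hre : Complex.normSq (u + 1) = (x + 1) ^ 2 + u.im ^ 2 := by
    simp [Complex.normSq_apply, hx]; ring
  have hx1 : x ≤ 1 := by nlinarith [sq_nonneg u.im, sq_nonneg (x + 1)]
  -- |u+3|^2 ≤ 12 + 4x
  have h3 : ‖u + 3‖ ^ 2 ≤ 12 + 4 * x := by
    rw [Complex.sq_norm]
    have : Complex.normSq (u + 3) = (x + 3) ^ 2 + u.im ^ 2 := by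
      simp [Complex.normSq_apply, hx]; ring
    nlinarith
  -- |u|^2 ≤ 3 - 2x
  have hb : ‖u‖ ^ 2 ≤ 3 - 2 * x := by
    rw [Complex.sq_norm]
    have : Complex.normSq u = x ^ 2 + u.im ^ 2 := by
      simp [Complex.normSq_apply, hx]; ring
    nlinarith
  -- |s|^2 = |u|
  have hsu : ‖s‖ ^ 2 = ‖u‖ := by
    rw [hu, norm_pow]
  -- |s| ≤ (3 - x)/2
  have hsbound : ‖s‖ ≤ (3 - x) / 2 := by
    have hc : (0 : ℝ) ≤ (3 - x) / 2 := by linarith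
    refine le_of_pow_le_pow_left₀ (n := 4) (by norm_num) hc ?_
    have h4 : ‖s‖ ^ 4 ≤ 3 - 2 * x := by
      calc ‖s‖ ^ 4 = (‖s‖ ^ 2) ^ 2 := by ring
        _ = ‖u‖ ^ 2 := by rw [hsu]
        _ ≤ 3 - 2 * x := hb
    have hpoly : 3 - 2 * x ≤ ((3 - x) / 2) ^ 4 := by
      nlinarith [sq_nonneg (x - 1), sq_nonneg (x - 5), sq_nonneg ((x - 1) * (x - 5))]
    linarith
  -- rewrite RK4 polynomial
  have keyrw : (1 : ℂ) + z + z ^ 2 / 2 + z ^ 3 / 6 + z ^ 4 / 24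
      = (u + 3) ^ 2 / 24 + s / 3 := by
    simp only [hu, hs]; ring
  rw [keyrw]
  calc ‖(u + 3) ^ 2 / 24 + s / 3‖
      ≤ ‖(u + 3) ^ 2 / 24‖ + ‖s / 3‖ := norm_add_le _ _
    _ = ‖u + 3‖ ^ 2 / 24 + ‖s‖ / 3 := by
        rw [norm_div, norm_div, norm_pow]
        norm_num
    _ ≤ (12 + 4 * x) / 24 + ((3 - x) / 2) / 3 := by
        have := norm_nonneg (u + 3)
        gcongr
    _ = 1 := by ring
end

section
/- Let μ ∈ ℝ. Every complex root ζ of the quadratic polynomial (3/2)ζ² − (2 + 2μ)ζ + (1/2 + μ) satisfies |ζ| ≤ 1 if and only if −4/3 ≤ μ ≤ 0. Consequently, for a real negative eigenvalue λ, the SBDF2 root condition holds for Δt > 0 if and only if Δt ≤ −4/(3λ), so the critical time-step of SBDF2 determined by the most negative eigenvalue λ_min is Δt* = −4/(3λ_min). -/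
theorem sbdf2_aux (μ : ℝ) :
    (∀ ζ : ℂ, (3 / 2) * ζ ^ 2 - (2 + 2 * (μ : ℂ)) * ζ + (1 / 2 + (μ : ℂ)) = 0 →
        ‖ζ‖ ≤ 1) ↔ (-4 / 3 ≤ μ ∧ μ ≤ 0) := by
  have hDnn : (0:ℝ) ≤ 4 * μ ^ 2 + 2 * μ + 1 := by nlinarith [sq_nonneg (2*μ + 1/2)]
  set s : ℝ := Real.sqrt (4 * μ ^ 2 + 2 * μ + 1) with hs
  have hsnn : 0 ≤ s := Real.sqrt_nonneg _
  have hs2 : s ^ 2 = 4 * μ ^ 2 + 2 * μ + 1 := Real.sq_sqrt hDnn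
  have hsC : (s:ℂ) ^ 2 = 4 * (μ:ℂ) ^ 2 + 2 * μ + 1 := by exact_mod_cast congrArg (fun x : ℝ => (x:ℂ)) hs2
  have hfact : ∀ ζ : ℂ, (3 / 2) * ζ ^ 2 - (2 + 2 * (μ : ℂ)) * ζ + (1 / 2 + (μ : ℂ))
      = (3/2) * (ζ - (((2 + 2*μ + s)/3 : ℝ) : ℂ)) * (ζ - (((2 + 2*μ - s)/3 : ℝ) : ℂ)) := by
    intro ζ
    push_cast
    linear_combination (1/6 : ℂ) * hsC
  constructor
  · intro h
    have h1 : ‖(((2 + 2*μ + s)/3 : ℝ) : ℂ)‖ ≤ 1 := by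
      apply h
      rw [hfact]; ring
    have h2 : ‖(((2 + 2*μ - s)/3 : ℝ) : ℂ)‖ ≤ 1 := by
      apply h
      rw [hfact]; ring
    rw [Complex.norm_real, Real.norm_eq_abs] at h1 h2
    have hb1 := (abs_le.mp h1).2
    have hb2 := (abs_le.mp h2).1
    -- hb1 : (2+2μ+s)/3 ≤ 1  ⇒ s ≤ 1 - 2μ
    have hs1 : s ≤ 1 - 2*μ := by linarith
    have hs2' : s ≤ 5 + 2*μ := by linarith
    have hq1 : 4 * μ ^ 2 + 2 * μ + 1 ≤ (1 - 2*μ)^2 := by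
      rw [← hs2]; exact pow_le_pow_left₀ hsnn hs1 2
    have hq2 : 4 * μ ^ 2 + 2 * μ + 1 ≤ (5 + 2*μ)^2 := by
      rw [← hs2]; exact pow_le_pow_left₀ hsnn hs2' 2
    constructor
    · nlinarith
    · nlinarith
  · rintro ⟨hl, hr⟩ ζ hζ
    have hs1 : s ≤ 1 - 2*μ := by
      have h1 : 4 * μ ^ 2 + 2 * μ + 1 ≤ (1 - 2*μ)^2 := by nlinarith
      calc s ≤ Real.sqrt ((1 - 2*μ)^2) := Real.sqrt_le_sqrt h1
        _ = 1 - 2*μ := Real.sqrt_sq (by linarith)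
    have hs2' : s ≤ 5 + 2*μ := by
      have h1 : 4 * μ ^ 2 + 2 * μ + 1 ≤ (5 + 2*μ)^2 := by nlinarith
      calc s ≤ Real.sqrt ((5 + 2*μ)^2) := Real.sqrt_le_sqrt h1
        _ = 5 + 2*μ := Real.sqrt_sq (by linarith)
    rw [hfact] at hζ
    rcases mul_eq_zero.mp hζ with h | h
    · rcases mul_eq_zero.mp h with h' | h'
      · norm_num at h'
      · have : ζ = (((2 + 2*μ + s)/3 : ℝ) : ℂ) := by linear_combination h'
        rw [this, Complex.norm_real, Real.norm_eq_abs, abs_le]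
        constructor <;> [linarith; linarith]
    · have : ζ = (((2 + 2*μ - s)/3 : ℝ) : ℂ) := by linear_combination h
      rw [this, Complex.norm_real, Real.norm_eq_abs, abs_le]
      constructor <;> [linarith; linarith]

/-- SBDF2 root condition on the real axis: for real `μ`, every complex root of
`(3/2)ζ² - (2+2μ)ζ + (1/2+μ)` lies in the closed unit disc iff `-4/3 ≤ μ ≤ 0`;
consequently, for a real negative eigenvalue `λ` and `Δt > 0`, the root condition
with `μ = Δt·λ` holds iff `Δt ≤ -4/(3λ)`. -/
theorem sbdf2_root_condition_real_axis :
    (∀ μ : ℝ,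
      ((∀ ζ : ℂ, (3 / 2) * ζ ^ 2 - (2 + 2 * (μ : ℂ)) * ζ + (1 / 2 + (μ : ℂ)) = 0 →
          ‖ζ‖ ≤ 1) ↔ (-4 / 3 ≤ μ ∧ μ ≤ 0))) ∧
    (∀ lam : ℝ, lam < 0 → ∀ dt : ℝ, 0 < dt →
      ((∀ ζ : ℂ, (3 / 2) * ζ ^ 2 - (2 + 2 * ((dt * lam : ℝ) : ℂ)) * ζ
          + (1 / 2 + ((dt * lam : ℝ) : ℂ)) = 0 → ‖ζ‖ ≤ 1) ↔
        dt ≤ -4 / (3 * lam))) := by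
  refine ⟨sbdf2_aux, ?_⟩
  intro lam hlam dt hdt
  rw [sbdf2_aux (dt * lam)]
  have h3 : 3 * lam < 0 := by linarith
  rw [le_div_iff_of_neg h3]
  constructor
  · rintro ⟨h1, _⟩; nlinarith
  · intro h
    refine ⟨by nlinarith, ?_⟩
    exact mul_nonpos_of_nonneg_of_nonpos hdt.le hlam.le
end
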